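/- Let $\mathcal N$ denote the standard normal CDF, $c_1 > 0$, $\lambda > 0$ with $c_1^2 = 2\lambda$, and $t < T$. Then $\lambda e^{\lambda t}\int_t^T \mathcal N(c_1\sqrt{T-u}) e^{-\lambda u}\, du = \mathcal N(c_1\sqrt{T-t}) - e^{-\lambda(T-t)}\Big(\frac 12 + \frac{c_1\sqrt{T-t}}{\sqrt{2\pi}}\Big).$ -/

import Mathlib

/-!
When `c² = 2λ`, the function
`F(u) = e^{-λu} 𝒩(c√(T-u)) - c e^{-λT} √(T-u) / √(2π)`
is an antiderivative of `-λ 𝒩(c√(T-u)) e^{-λu}`: differentiating `𝒩(c√(T-u))` produces the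
Gaussian density `e^{-c²(T-u)/2} / √(2π) = e^{-λ(T-u)} / √(2π)`, whose product with `e^{-λu}` is
the constant `e^{-λT} / √(2π)`, and this term is cancelled by the derivative of the second
summand. The formula is then `e^{λt} (F(t) - F(T))` with `𝒩(0) = 1/2`.
-/

open MeasureTheory Real Set ProbabilityTheory

noncomputable def stdNormalCDF (x : ℝ) : ℝ :=
  ∫ z in Set.Iic x, Real.exp (-z ^ 2 / 2) / Real.sqrt (2 * Real.pi)

theorem hasDerivAt_integral_Iic {E : Type*} [NormedAddCommGroup E] [NormedSpace ℝ E]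
    [CompleteSpace E] {f : ℝ → E} (hf : Continuous f) (hfi : Integrable f) (x : ℝ) :
    HasDerivAt (fun y => ∫ z in Iic y, f z) (f x) x := by
  have hsplit : (fun y => ∫ z in Iic y, f z)
      = fun y => (∫ z in (0 : ℝ)..y, f z) + ∫ z in Iic 0, f z := by
    ext y
    rw [← intervalIntegral.integral_Iic_sub_Iic hfi.integrableOn hfi.integrableOn,
      sub_add_cancel]
  rw [hsplit]
  exact (intervalIntegral.integral_hasDerivAt_right hfi.intervalIntegrable
    hf.stronglyMeasurable.stronglyMeasurableAtFilter hf.continuousAt).add_const _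

theorem integral_Iic_zero_of_even {f : ℝ → ℝ} (hfi : Integrable f) (heven : ∀ x, f (-x) = f x) :
    ∫ z in Iic 0, f z = (∫ z, f z) / 2 := by
  have hflip : ∫ z in Iic 0, f z = ∫ z in Ioi 0, f z := by
    simpa [heven] using integral_comp_neg_Iic 0 f
  have := intervalIntegral.integral_Iic_add_Ioi (b := 0) hfi.integrableOn hfi.integrableOn
  linarith

theorem gaussianPDFReal_zero_one :
    gaussianPDFReal 0 1 = fun z => exp (-z ^ 2 / 2) / √(2 * π) := by
  ext z
  simp [gaussianPDFReal, div_eq_inv_mul]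

theorem stdNormalCDF_eq_integral_gaussianPDFReal (x : ℝ) :
    stdNormalCDF x = ∫ z in Iic x, gaussianPDFReal 0 1 z := by
  rw [gaussianPDFReal_zero_one, stdNormalCDF]

theorem stdNormalCDF_zero : stdNormalCDF 0 = 1 / 2 := by
  rw [stdNormalCDF_eq_integral_gaussianPDFReal,
    integral_Iic_zero_of_even (integrable_gaussianPDFReal 0 1) (by simp [gaussianPDFReal]),
    integral_gaussianPDFReal_eq_one 0 one_ne_zero]

theorem hasDerivAt_stdNormalCDF (x : ℝ) :
    HasDerivAt stdNormalCDF (exp (-x ^ 2 / 2) / √(2 * π)) x := by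
  have := hasDerivAt_integral_Iic (by rw [gaussianPDFReal_zero_one]; fun_prop)
    (integrable_gaussianPDFReal 0 1) x
  rw [gaussianPDFReal_zero_one] at this
  exact this

@[fun_prop]
theorem continuous_stdNormalCDF : Continuous stdNormalCDF :=
  continuous_iff_continuousAt.2 fun x => (hasDerivAt_stdNormalCDF x).continuousAt

theorem hasDerivAt_exp_mul_stdNormalCDF_sqrt_sub {c l T u : ℝ} (hcase : c ^ 2 = 2 * l)
    (hu : u < T) :
    HasDerivAt
      (fun v => exp (-l * v) * stdNormalCDF (c * √(T - v))
        - c * exp (-l * T) * √(T - v) / √(2 * π))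
      (-(l * (stdNormalCDF (c * √(T - u)) * exp (-l * u)))) u := by
  have hTu : 0 < T - u := sub_pos.2 hu
  have hsqrt : HasDerivAt (fun v => √(T - v)) (-1 / (2 * √(T - u))) u := by
    simpa using ((hasDerivAt_id u).const_sub T).sqrt hTu.ne'
  have hexp : HasDerivAt (fun v => exp (-l * v)) (exp (-l * u) * -l) u := by
    simpa using ((hasDerivAt_id u).const_mul (-l)).exp
  have hN := (hasDerivAt_stdNormalCDF (c * √(T - u))).comp u (hsqrt.const_mul c)
  have hcancel : exp (-l * u) * exp (-(c * √(T - u)) ^ 2 / 2) = exp (-l * T) := by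
    rw [← exp_add, mul_pow, sq_sqrt hTu.le, hcase]
    ring_nf
  refine ((hexp.mul hN).sub
    ((hsqrt.const_mul (c * exp (-l * T))).div_const √(2 * π))).congr_deriv ?_
  simp only [Function.comp_apply]
  linear_combination (c * (-1 / (2 * √(T - u))) / √(2 * π)) * hcancel

theorem mul_integral_stdNormalCDF_sqrt_sub_mul_exp {c l t T : ℝ} (hcase : c ^ 2 = 2 * l)
    (htT : t ≤ T) :
    l * ∫ u in t..T, stdNormalCDF (c * √(T - u)) * exp (-l * u)
      = exp (-l * t) * stdNormalCDF (c * √(T - t)) - c * exp (-l * T) * √(T - t) / √(2 * π)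
          - exp (-l * T) / 2 := by
  have hFTC := intervalIntegral.integral_eq_sub_of_hasDerivAt_of_le htT (by fun_prop)
    (fun u hu => hasDerivAt_exp_mul_stdNormalCDF_sqrt_sub hcase hu.2)
    ((by fun_prop : Continuous fun u => -(l * (stdNormalCDF (c * √(T - u)) * exp (-l * u))))
      |>.intervalIntegrable t T)
  rw [intervalIntegral.integral_neg, intervalIntegral.integral_const_mul] at hFTC
  simp only [sub_self, sqrt_zero, mul_zero, zero_div, stdNormalCDF_zero, sub_zero] at hFTC
  linear_combination -hFTC

theorem A1_case_eq_general (c₁ l t T : ℝ)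
    (hcase : c₁ ^ 2 = 2 * l) (htT : t < T) :
    l * Real.exp (l * t) *
        ∫ u in t..T, stdNormalCDF (c₁ * Real.sqrt (T - u)) * Real.exp (-l * u)
      = stdNormalCDF (c₁ * Real.sqrt (T - t))
        - Real.exp (-l * (T - t)) * (1 / 2 + c₁ * Real.sqrt (T - t) / Real.sqrt (2 * Real.pi)) := by
  have hexp_t : exp (l * t) * exp (-l * t) = 1 := by rw [← exp_add]; simp
  have hexp_T : exp (l * t) * exp (-l * T) = exp (-l * (T - t)) := by rw [← exp_add]; ring_nf
  linear_combination exp (l * t) * mul_integral_stdNormalCDF_sqrt_sub_mul_exp hcase htT.le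
    + stdNormalCDF (c₁ * √(T - t)) * hexp_t - (1 / 2 + c₁ * √(T - t) / √(2 * π)) * hexp_T

/-- Explicit value of `A₁(t,T)` in the degenerate case `c₁² = 2λ`. -/
theorem A1_case_eq (c₁ l t T : ℝ) (hc₁ : 0 < c₁) (hl : 0 < l)
    (hcase : c₁ ^ 2 = 2 * l) (htT : t < T) :
    l * Real.exp (l * t) *
        ∫ u in t..T, stdNormalCDF (c₁ * Real.sqrt (T - u)) * Real.exp (-l * u)
      = stdNormalCDF (c₁ * Real.sqrt (T - t))
        - Real.exp (-l * (T - t)) * (1 / 2 + c₁ * Real.sqrt (T - t) / Real.sqrt (2 * Real.pi)) :=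
  A1_case_eq_general c₁ l t T hcase htT
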